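/- Core invariant of the naive version-vector counter: in any configuration reached at time t by a finite execution of the naive G-Counter, for all nodes i and j: the self entry (s j) j equals inc_j(t), the number of inc j steps performed before time t, and every entry (s i) j satisfies (s i) j ≤ inc_j(t). -/
import Mathlib


/-- Labels for the steps of the naive version-vector (G-Counter) model:
a local increment at node `i`, or a merge into node `i`'s replica. -/
inductive GLab (ι : Type) where
  | inc (i : ι)
  | merge (i : ι)
deriving DecidableEq

/-- `(GLab.isInc l) = true` iff `l` labels a local increment step. -/
def GLab.isInc {ι : Type} : GLab ι → Bool
  | .inc _ => true
  | .merge _ => false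

/-- An execution of the naive G-Counter: `st t i : ι →₀ ℕ` is the replica of
node `i` in the configuration at time `t`, starting from the all-zero
configuration.  Each step changes only one node `i`'s replica: a local
increment (`inc i`) adds `Finsupp.single i 1` to `s i`, and a merge replaces
`s i` by `s i ⊔ v` (pointwise maximum), where `v` is the replica of some node
`j` in some earlier configuration of the execution. -/
def GExec {ι : Type} [DecidableEq ι]
    (st : ℕ → ι → (ι →₀ ℕ)) (lab : ℕ → GLab ι) : Prop :=
  (∀ i, st 0 i = 0) ∧
  ∀ n, match lab n with
    | .inc i =>
        st (n + 1) i = st n i + Finsupp.single i 1 ∧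
        ∀ j, j ≠ i → st (n + 1) j = st n j
    | .merge i =>
        (∃ m ≤ n, ∃ j, st (n + 1) i = st n i ⊔ st m j) ∧
        ∀ j, j ≠ i → st (n + 1) j = st n j

/-- `incCount lab j t`: the number of `inc j` steps performed before time `t`. -/
def incCount {ι : Type} [DecidableEq ι] (lab : ℕ → GLab ι) (j : ι) (t : ℕ) : ℕ :=
  ((Finset.range t).filter (fun n => lab n = GLab.inc j)).card

/-- `totalIncCount lab t`: the total number of increment steps (over all
nodes) performed before time `t`. -/
def totalIncCount {ι : Type} (lab : ℕ → GLab ι) (t : ℕ) : ℕ :=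
  ((Finset.range t).filter (fun n => (lab n).isInc)).card

/-- The fetch at node `i`: the sum of all entries of its replica. -/
def gfetch {ι : Type} (st : ℕ → ι → (ι →₀ ℕ)) (t : ℕ) (i : ι) : ℕ :=
  (st t i).sum fun _ v => v

lemma incCount_mono {ι : Type} [DecidableEq ι] (lab : ℕ → GLab ι) (j : ι)
    {a b : ℕ} (h : a ≤ b) : incCount lab j a ≤ incCount lab j b := by
  apply Finset.card_le_card
  apply Finset.filter_subset_filter
  exact Finset.range_subset_range.2 h

lemma incCount_succ {ι : Type} [DecidableEq ι] (lab : ℕ → GLab ι) (j : ι) (n : ℕ) :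
    incCount lab j (n + 1) =
      incCount lab j n + (if lab n = GLab.inc j then 1 else 0) := by
  unfold incCount
  rw [Finset.range_add_one, Finset.filter_insert]
  split <;> simp [Finset.card_insert_of_notMem, Finset.notMem_range_self]

/-- Core invariant of the naive version-vector counter: in any configuration
reached at time `t` by a finite execution of the naive G-Counter, for all
nodes `i` and `j`, the self entry `(s j) j` equals the number of `inc j` steps
performed before time `t`, and every entry `(s i) j` is at most that number. -/
theorem gcounter_core_invariant {ι : Type} [DecidableEq ι]
    (st : ℕ → ι → (ι →₀ ℕ)) (lab : ℕ → GLab ι) (hexec : GExec st lab)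
    (t : ℕ) (i j : ι) :
    (st t j) j = incCount lab j t ∧ (st t i) j ≤ incCount lab j t := by
  have key : ∀ t, ∀ i j : ι, (st t j) j = incCount lab j t ∧
      (st t i) j ≤ incCount lab j t := by
    intro t
    induction t using Nat.strong_induction_on with
    | _ n ih =>
      match n with
      | 0 =>
        intro i j
        simp [hexec.1, incCount]
      | Nat.succ n =>
        intro i j
        have hstep := hexec.2 n
        have hmono := incCount_mono lab j (Nat.le_succ n)
        cases hl : lab n with
        | inc k =>
          rw [hl] at hstep
          obtain ⟨hk, hother⟩ := hstep
          have hbound : ∀ i', (st (n+1) i') j ≤ incCount lab j (n+1) := by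
            intro i'
            by_cases hik : i' = k
            · subst hik
              rw [hk, Finsupp.add_apply, Finsupp.single_apply]
              rw [incCount_succ, hl]
              by_cases hkj : i' = j
              · subst hkj
                simp only [if_pos rfl]
                exact Nat.add_le_add ((ih n (Nat.lt_succ_self n) i' i').2) le_rfl
              · have hne : ¬ (GLab.inc i' = GLab.inc j) := by
                  intro h; injection h with h'; exact hkj h'
                simp only [if_neg hkj, if_neg hne, Nat.add_zero]
                exact le_trans ((ih n (Nat.lt_succ_self n) i' j).2) le_rfl
            · rw [hother i' hik]
              exact le_trans ((ih n (Nat.lt_succ_self n) i' j).2) hmono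
          refine ⟨?_, hbound i⟩
          by_cases hjk : j = k
          · subst hjk
            rw [hk, Finsupp.add_apply, Finsupp.single_apply, if_pos rfl]
            rw [incCount_succ, hl, if_pos rfl]
            rw [(ih n (Nat.lt_succ_self n) j j).1]
          · rw [hother j hjk, incCount_succ, hl]
            have hne : ¬ (GLab.inc k = GLab.inc j) := by
              intro h; injection h with h'; exact hjk h'.symm
            rw [if_neg hne, Nat.add_zero]
            exact (ih n (Nat.lt_succ_self n) j j).1
        | merge k =>
          rw [hl] at hstep
          obtain ⟨⟨m, hm, j', hmerge⟩, hother⟩ := hstep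
          have hcount : incCount lab j (n+1) = incCount lab j n := by
            rw [incCount_succ, hl]; simp
          have hbound : ∀ i', (st (n+1) i') j ≤ incCount lab j (n+1) := by
            intro i'
            by_cases hik : i' = k
            · subst hik
              rw [hmerge, Finsupp.sup_apply, hcount]
              exact sup_le ((ih n (Nat.lt_succ_self n) i' j).2)
                (le_trans ((ih m (Nat.lt_succ_of_le hm) j' j).2)
                  (incCount_mono lab j hm))
            · rw [hother i' hik, hcount]
              exact (ih n (Nat.lt_succ_self n) i' j).2
          refine ⟨?_, hbound i⟩
          by_cases hjk : j = k
          · subst hjk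
            rw [hmerge, Finsupp.sup_apply, hcount]
            rw [(ih n (Nat.lt_succ_self n) j j).1] at *
            exact sup_eq_left.2 (le_trans ((ih m (Nat.lt_succ_of_le hm) j' j).2)
              (incCount_mono lab j hm))
          · rw [hother j hjk, hcount]
            exact (ih n (Nat.lt_succ_self n) j j).1
  exact key t i j
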